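/- Let Q = S₁ × ⋯ × Sₙ with each |Sₖ| ≥ 2, let 𝒜 be a collection of hyperplanes in Q, let 𝒜ₖ = {A ∈ 𝒜 : max F(A) = k}, Bₖ = ⋃_{A ∈ 𝒜ₖ} A, and let αₖ(x) be the proportion of the fibre {x} × Sₖ contained in Bₖ. Fix δ ∈ (0, 1/2] and define the distorted measures Pₖ as in the distortion method. If (1/(4δ(1−δ))) · ∑_{k=1}^n E_{k-1}[αₖ(x)²] < 1, then ⋃_{A ∈ 𝒜} A ≠ Q, i.e., the hyperplanes 𝒜 do not cover Q. -/

import Mathlib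

open Finset

attribute [local instance] Classical.propDecidable

/-- A hyperplane in a product `∀ i, S i`: each coordinate factor is either
the full set or a singleton. -/
structure Hyperplane {ι : Type*} (S : ι → Type*) where
  Y : ∀ i, Set (S i)
  full_or_singleton : ∀ i, Y i = Set.univ ∨ ∃ a, Y i = {a}

namespace Hyperplane

variable {ι : Type*} {S : ι → Type*}

/-- The set of points of the hyperplane. -/
def toSet (A : Hyperplane S) : Set (∀ i, S i) := {x | ∀ i, x i ∈ A.Y i}

/-- The set of fixed coordinates. -/
def fixedSet (A : Hyperplane S) : Set ι := {i | A.Y i ≠ Set.univ}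

/-- The fixed coordinates as a `Finset`. -/
noncomputable def fixedFinset [Fintype ι] (A : Hyperplane S) : Finset ι :=
  Finset.univ.filter fun i => A.Y i ≠ Set.univ

end Hyperplane

section Distortion

variable {n : ℕ} {S : Fin n → Type*}

/-- The proportion of the fibre through `x` in direction `k` covered by `B`. -/
noncomputable def alpha [∀ i, Fintype (S i)] (B : Set (∀ i, S i)) (k : Fin n)
    (x : ∀ i, S i) : ℝ :=
  (Finset.univ.filter fun y : S k => Function.update x k y ∈ B).card / Fintype.card (S k)

/-- The distorted point masses `P_k` of the distortion method, as densities on the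
full product: `P 0` is uniform, and `P (k+1)` reweights `P k` on each fibre in
direction `k` according to the covered set `B k`. -/
noncomputable def distP [∀ i, Fintype (S i)] (B : Fin n → Set (∀ i, S i)) (δ : ℝ) :
    ℕ → (∀ i, S i) → ℝ
  | 0, _ => 1 / Fintype.card (∀ i, S i)
  | (k + 1), x =>
    (if h : k < n then
      (if x ∈ B ⟨k, h⟩ then
        max 0 ((alpha (B ⟨k, h⟩) ⟨k, h⟩ x - δ) / (alpha (B ⟨k, h⟩) ⟨k, h⟩ x * (1 - δ)))
      else
        min (1 / (1 - alpha (B ⟨k, h⟩) ⟨k, h⟩ x)) (1 / (1 - δ)))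
     else 1) * distP B δ k x

/-- The `P_k`-measure of a subset of the product. -/
noncomputable def distPMeas [∀ i, Fintype (S i)] (B : Fin n → Set (∀ i, S i)) (δ : ℝ)
    (k : ℕ) (X : Set (∀ i, S i)) : ℝ :=
  ∑ z : ∀ i, S i, if z ∈ X then distP B δ k z else 0

/-- `X` depends only on the coordinates `i` with `i < m`. -/
def DependsOn' (X : Set (∀ i, S i)) (m : ℕ) : Prop :=
  ∀ x y : ∀ i, S i, (∀ i : Fin n, (i : ℕ) < m → x i = y i) → x ∈ X → y ∈ X

/-- `B_k`: the union of the hyperplanes of `𝒜` whose largest fixed coordinate is `k`. -/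
noncomputable def coverSet [∀ i, Fintype (S i)] (𝒜 : Finset (Hyperplane S)) (k : Fin n) :
    Set (∀ i, S i) :=
  {x | ∃ A ∈ 𝒜, A.fixedFinset.max = (k : WithBot (Fin n)) ∧ x ∈ A.toSet}

/-- `A^{[m]}`: the hyperplane obtained from `A` by replacing the factors with
index `≥ m` by the full sets. -/
def projSet (A : Hyperplane S) (m : ℕ) : Set (∀ i, S i) :=
  {x | ∀ i : Fin n, (i : ℕ) < m → x i ∈ A.Y i}

end Distortion

section Aux

open Finset Function

variable {n : ℕ} {S : Fin n → Type*} [∀ i, Fintype (S i)]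

/-- The step weight factor. -/
noncomputable def wt (B : Fin n → Set (∀ i, S i)) (δ : ℝ) (k : Fin n) (x : ∀ i, S i) : ℝ :=
  if x ∈ B k then
    max 0 ((alpha (B k) k x - δ) / (alpha (B k) k x * (1 - δ)))
  else
    min (1 / (1 - alpha (B k) k x)) (1 / (1 - δ))

variable {B : Fin n → Set (∀ i, S i)} {δ : ℝ}

lemma distP_succ_lt {m : ℕ} (h : m < n) (x : ∀ i, S i) :
    distP B δ (m + 1) x = wt B δ ⟨m, h⟩ x * distP B δ m x := by
  rw [distP, dif_pos h, wt]

lemma distP_succ_ge {m : ℕ} (h : ¬ m < n) (x : ∀ i, S i) :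
    distP B δ (m + 1) x = distP B δ m x := by
  rw [distP, dif_neg h, one_mul]

lemma alpha_nonneg (X : Set (∀ i, S i)) (k : Fin n) (x : ∀ i, S i) :
    0 ≤ alpha X k x := by
  apply div_nonneg <;> positivity

lemma alpha_le_one (X : Set (∀ i, S i)) (k : Fin n) (x : ∀ i, S i) :
    alpha X k x ≤ 1 := by
  rcases Nat.eq_zero_or_pos (Fintype.card (S k)) with h | h
  · rw [alpha, h]
    norm_num
  · rw [alpha, div_le_one (by exact_mod_cast h)]
    exact_mod_cast Finset.card_filter_le _ _

lemma alpha_update (X : Set (∀ i, S i)) (k : Fin n) (x : ∀ i, S i) (y : S k) :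
    alpha X k (Function.update x k y) = alpha X k x := by
  simp only [alpha, Function.update_idem]

omit [∀ i, Fintype (S i)] in
lemma mem_iff_of_depends {X : Set (∀ i, S i)} {m : ℕ} (hX : DependsOn' X m)
    {x y : ∀ i, S i} (h : ∀ i : Fin n, (i : ℕ) < m → x i = y i) : x ∈ X ↔ y ∈ X :=
  ⟨hX x y h, hX y x fun i hi => (h i hi).symm⟩

lemma distP_nonneg (hδ1 : δ ≤ 1 / 2) : ∀ m (x : ∀ i, S i), 0 ≤ distP B δ m x := by
  intro m
  induction m with
  | zero => intro x; rw [distP]; positivity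
  | succ m ih =>
    intro x
    by_cases h : m < n
    · rw [distP_succ_lt h]
      refine mul_nonneg ?_ (ih x)
      rw [wt]
      split
      · exact le_max_left _ _
      · refine le_min (one_div_nonneg.2 ?_) (one_div_nonneg.2 (by linarith))
        have := alpha_le_one (B ⟨m, h⟩) ⟨m, h⟩ x
        linarith
    · rw [distP_succ_ge h]; exact ih x

lemma distP_update (hB : ∀ j : Fin n, DependsOn' (B j) ((j : ℕ) + 1)) (k : Fin n) :
    ∀ m, m ≤ (k : ℕ) → ∀ (z : ∀ i, S i) (y : S k),
      distP B δ m (Function.update z k y) = distP B δ m z := by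
  intro m
  induction m with
  | zero => intro _ z y; rw [distP, distP]
  | succ m ih =>
    intro hm z y
    have hmn : m < n := lt_of_lt_of_le (Nat.lt_of_succ_le hm) (le_of_lt k.isLt)
    have hkj : (⟨m, hmn⟩ : Fin n) ≠ k := by
      intro h
      have : m = (k : ℕ) := congrArg Fin.val h
      omega
    have hagree : ∀ i : Fin n, (i : ℕ) < m + 1 → Function.update z k y i = z i := by
      intro i hi
      apply Function.update_of_ne
      intro h; subst h; omega
    rw [distP_succ_lt hmn, distP_succ_lt hmn, ih (le_of_lt (Nat.lt_of_succ_le hm)) z y]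
    congr 1
    rw [wt, wt]
    have hmem : Function.update z k y ∈ B ⟨m, hmn⟩ ↔ z ∈ B ⟨m, hmn⟩ :=
      mem_iff_of_depends (hB ⟨m, hmn⟩) hagree
    have halpha : alpha (B ⟨m, hmn⟩) ⟨m, hmn⟩ (Function.update z k y)
        = alpha (B ⟨m, hmn⟩) ⟨m, hmn⟩ z := by
      have hfil : (Finset.univ.filter fun a : S ⟨m, hmn⟩ =>
            Function.update (Function.update z k y) ⟨m, hmn⟩ a ∈ B ⟨m, hmn⟩)
          = (Finset.univ.filter fun a : S ⟨m, hmn⟩ =>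
            Function.update z ⟨m, hmn⟩ a ∈ B ⟨m, hmn⟩) := by
        apply Finset.filter_congr
        intro a _
        rw [Function.update_comm hkj.symm]
        apply mem_iff_of_depends (hB ⟨m, hmn⟩)
        intro i hi
        have hik : i ≠ k := by
          intro h; subst h
          have hval : ((⟨m, hmn⟩ : Fin n) : ℕ) = m := rfl
          omega
        exact Function.update_of_ne hik y _
      rw [alpha, alpha, hfil]
    rw [halpha]
    by_cases hz : z ∈ B ⟨m, hmn⟩
    · rw [if_pos (hmem.mpr hz), if_pos hz]
    · rw [if_neg (fun h => hz (hmem.mp h)), if_neg hz]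

/-- Summing a function over all fibres in direction `k`. -/
lemma sum_fiber (k : Fin n) (f : (∀ i, S i) → ℝ) :
    ∑ z : ∀ i, S i, ∑ y : S k, f (Function.update z k y)
      = (Fintype.card (S k) : ℝ) * ∑ z : ∀ i, S i, f z := by
  classical
  let e := Equiv.piSplitAt k S
  have key : ∀ (a : S k) (w : ∀ j : {j // j ≠ k}, S j) (y : S k),
      Function.update (e.symm (a, w)) k y = e.symm (y, w) := by
    intro a w y
    apply e.injective
    rw [Equiv.apply_symm_apply]
    ext1
    · show Function.update (e.symm (a, w)) k y k = y
      simp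
    · funext j
      show Function.update (e.symm (a, w)) k y j.1 = w j
      rw [Function.update_of_ne j.2]
      show e.symm (a, w) j.1 = w j
      simp [e, Equiv.piSplitAt, dif_neg j.2]
  calc ∑ z : ∀ i, S i, ∑ y : S k, f (Function.update z k y)
      = ∑ p : S k × (∀ j : {j // j ≠ k}, S j), ∑ y : S k, f (Function.update (e.symm p) k y) :=
        (Equiv.sum_comp e.symm _).symm
    _ = ∑ p : S k × (∀ j : {j // j ≠ k}, S j), ∑ y : S k, f (e.symm (y, p.2)) := by
        refine Finset.sum_congr rfl fun p _ => Finset.sum_congr rfl fun y _ => ?_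
        rw [key p.1 p.2 y]
    _ = ∑ a : S k, ∑ w : (∀ j : {j // j ≠ k}, S j), ∑ y : S k, f (e.symm (y, w)) := by
        rw [Fintype.sum_prod_type]
    _ = (Fintype.card (S k) : ℝ) * ∑ w : (∀ j : {j // j ≠ k}, S j), ∑ y : S k, f (e.symm (y, w)) := by
        rw [Finset.sum_const, nsmul_eq_mul, Fintype.card]
    _ = (Fintype.card (S k) : ℝ) * ∑ p : S k × (∀ j : {j // j ≠ k}, S j), f (e.symm p) := by
        rw [Fintype.sum_prod_type]
        congr 1
        rw [Finset.sum_comm]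
    _ = (Fintype.card (S k) : ℝ) * ∑ z : ∀ i, S i, f z := by
        rw [Equiv.sum_comp e.symm f]

/-- The number of covered points of the fibre through `z` equals `α z * N`. -/
lemma card_filter_eq (X : Set (∀ i, S i)) (k : Fin n) (z : ∀ i, S i)
    (hk : (Fintype.card (S k) : ℝ) ≠ 0) :
    ((Finset.univ.filter fun y : S k => Function.update z k y ∈ X).card : ℝ)
      = alpha X k z * Fintype.card (S k) := by
  rw [alpha, div_mul_cancel₀ _ hk]

end Aux

section Aux2

open Finset Function

variable {n : ℕ} {S : Fin n → Type*} [∀ i, Fintype (S i)]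
variable {B : Fin n → Set (∀ i, S i)} {δ : ℝ}

/-- Sum of step weights over a fibre is the cardinality of the fibre. -/
lemma sum_wt (hδ0 : 0 < δ) (hδ1 : δ ≤ 1 / 2) (k : Fin n)
    (hk : 0 < Fintype.card (S k)) (z : ∀ i, S i) :
    ∑ y : S k, wt B δ k (Function.update z k y) = (Fintype.card (S k) : ℝ) := by
  classical
  set α := alpha (B k) k z with hα
  have hα0 : 0 ≤ α := alpha_nonneg _ _ _
  have hα1 : α ≤ 1 := alpha_le_one _ _ _
  have hδ' : (0:ℝ) < 1 - δ := by linarith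
  have hN : (0:ℝ) < Fintype.card (S k) := by exact_mod_cast hk
  have hwt : ∀ y : S k, wt B δ k (Function.update z k y) =
      if Function.update z k y ∈ B k then max 0 ((α - δ) / (α * (1 - δ)))
      else min (1 / (1 - α)) (1 / (1 - δ)) := by
    intro y; rw [wt, alpha_update]
  rw [Finset.sum_congr rfl fun y _ => hwt y, Finset.sum_ite, Finset.sum_const,
    Finset.sum_const, nsmul_eq_mul, nsmul_eq_mul, card_filter_eq _ _ _ hN.ne']
  rw [← hα]
  have hcard : ((Finset.univ.filter fun y : S k => ¬ Function.update z k y ∈ B k).card : ℝ)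
      = (1 - α) * Fintype.card (S k) := by
    have := Finset.card_filter_add_card_filter_not
      (s := (Finset.univ : Finset (S k))) (fun y => Function.update z k y ∈ B k)
    have h2 : ((Finset.univ.filter fun y : S k => Function.update z k y ∈ B k).card : ℝ)
        + ((Finset.univ.filter fun y : S k => ¬ Function.update z k y ∈ B k).card : ℝ)
        = Fintype.card (S k) := by exact_mod_cast this
    rw [card_filter_eq _ _ _ hN.ne'] at h2
    linarith
  rw [hcard]
  by_cases hcase : α < δ
  · have hm : max 0 ((α - δ) / (α * (1 - δ))) = 0 := by
      rw [max_eq_left]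
      apply div_nonpos_of_nonpos_of_nonneg (by linarith)
      exact mul_nonneg hα0 (by linarith)
    have hα1' : α < 1 := lt_of_lt_of_le hcase (by linarith)
    have hmin : min (1 / (1 - α)) (1 / (1 - δ)) = 1 / (1 - α) := by
      apply min_eq_left
      apply one_div_le_one_div_of_le hδ'
      linarith
    rw [hm, hmin]
    have h1α : (1:ℝ) - α ≠ 0 := by linarith
    field_simp
    ring
  · push_neg at hcase
    have hαpos : 0 < α := lt_of_lt_of_le hδ0 hcase
    have hm : max 0 ((α - δ) / (α * (1 - δ))) = (α - δ) / (α * (1 - δ)) := by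
      rw [max_eq_right]
      apply div_nonneg (by linarith) (mul_nonneg hα0 (by linarith))
    rw [hm]
    by_cases hα1' : α = 1
    · rw [hα1']
      have h1δ : (1:ℝ) - δ ≠ 0 := by linarith
      field_simp
      simp
    · have hαlt : α < 1 := lt_of_le_of_ne hα1 hα1'
      have hmin : min (1 / (1 - α)) (1 / (1 - δ)) = 1 / (1 - δ) := by
        apply min_eq_right
        apply one_div_le_one_div_of_le (by linarith)
        linarith
      rw [hmin]
      have h1δ : (1:ℝ) - δ ≠ 0 := by linarith
      have hαne : α ≠ 0 := ne_of_gt hαpos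
      field_simp
      ring
  
/-- Total mass of `P_m` is 1. -/
lemma distP_total (hδ0 : 0 < δ) (hδ1 : δ ≤ 1/2) (hS : ∀ i, 2 ≤ Fintype.card (S i))
    (hB : ∀ j : Fin n, DependsOn' (B j) ((j : ℕ) + 1)) :
    ∀ m, ∑ z : ∀ i, S i, distP B δ m z = 1 := by
  haveI : ∀ i, Nonempty (S i) := fun i => Fintype.card_pos_iff.mp (by linarith [hS i])
  intro m
  induction m with
  | zero =>
    simp only [distP]
    rw [Finset.sum_const, nsmul_eq_mul]
    rw [Fintype.card]
    rw [mul_one_div, div_self]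
    have : 0 < Fintype.card (∀ i, S i) := Fintype.card_pos
    exact_mod_cast this.ne'
  | succ m ih =>
    by_cases h : m < n
    · set k : Fin n := ⟨m, h⟩ with hkdef
      have hk : 0 < Fintype.card (S k) := by linarith [hS k]
      have hN : (0:ℝ) < Fintype.card (S k) := by exact_mod_cast hk
      have hfib := sum_fiber k (fun z => distP B δ (m+1) z)
      have inner : ∀ z : ∀ i, S i, ∑ y : S k, distP B δ (m+1) (Function.update z k y)
          = (Fintype.card (S k) : ℝ) * distP B δ m z := by
        intro z
        have : ∀ y : S k, distP B δ (m+1) (Function.update z k y)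
            = wt B δ k (Function.update z k y) * distP B δ m z := by
          intro y
          rw [distP_succ_lt h, distP_update hB k m (le_refl _) z y]
        rw [Finset.sum_congr rfl fun y _ => this y, ← Finset.sum_mul,
          sum_wt hδ0 hδ1 k hk z]
      rw [Finset.sum_congr rfl fun z _ => inner z, ← Finset.mul_sum, ih] at hfib
      have := mul_left_cancel₀ hN.ne' hfib
      linarith [this]
    · rw [Finset.sum_congr rfl fun z _ => distP_succ_ge h z, ih]

/-- Preservation of measure of old sets. -/
lemma distPMeas_succ (hδ0 : 0 < δ) (hδ1 : δ ≤ 1/2) (hS : ∀ i, 2 ≤ Fintype.card (S i))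
    (hB : ∀ j : Fin n, DependsOn' (B j) ((j : ℕ) + 1))
    {X : Set (∀ i, S i)} {m' : ℕ} (hX : DependsOn' X m') {m : ℕ} (hm : m' ≤ m) :
    distPMeas B δ (m + 1) X = distPMeas B δ m X := by
  classical
  by_cases h : m < n
  · set k : Fin n := ⟨m, h⟩ with hkdef
    have hk : 0 < Fintype.card (S k) := by linarith [hS k]
    have hN : (0:ℝ) < Fintype.card (S k) := by exact_mod_cast hk
    have hfib := sum_fiber k (fun z => if z ∈ X then distP B δ (m+1) z else 0)
    have inner : ∀ z : ∀ i, S i,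
        ∑ y : S k, (if Function.update z k y ∈ X then distP B δ (m+1) (Function.update z k y) else 0)
        = (Fintype.card (S k) : ℝ) * (if z ∈ X then distP B δ m z else 0) := by
      intro z
      have hmemX : ∀ y : S k, (Function.update z k y ∈ X ↔ z ∈ X) := by
        intro y
        apply mem_iff_of_depends hX
        intro i hi
        apply Function.update_of_ne
        intro hik; subst hik
        simp only [hkdef] at hi
        omega
      by_cases hz : z ∈ X
      · have : ∀ y : S k, (if Function.update z k y ∈ X then distP B δ (m+1) (Function.update z k y) else 0)
            = wt B δ k (Function.update z k y) * distP B δ m z := by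
          intro y
          rw [if_pos ((hmemX y).mpr hz), distP_succ_lt h,
            distP_update hB k m (le_refl _) z y]
        rw [Finset.sum_congr rfl fun y _ => this y, ← Finset.sum_mul,
          sum_wt hδ0 hδ1 k hk z, if_pos hz]
      · have : ∀ y : S k, (if Function.update z k y ∈ X then distP B δ (m+1) (Function.update z k y) else 0)
            = 0 := by
          intro y
          rw [if_neg (fun hc => hz ((hmemX y).mp hc))]
        rw [Finset.sum_congr rfl fun y _ => this y, Finset.sum_const, if_neg hz]
        simp
    rw [Finset.sum_congr rfl fun z _ => inner z, ← Finset.mul_sum] at hfib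
    have := mul_left_cancel₀ hN.ne' hfib
    rw [distPMeas, distPMeas]
    linarith [this]
  · rw [distPMeas, distPMeas]
    exact Finset.sum_congr rfl fun z _ => by
      by_cases hz : z ∈ X
      · rw [if_pos hz, if_pos hz, distP_succ_ge h]
      · rw [if_neg hz, if_neg hz]

/-- The key per-step bound. -/
lemma distPMeas_key (hδ0 : 0 < δ) (hδ1 : δ ≤ 1/2) (hS : ∀ i, 2 ≤ Fintype.card (S i))
    (hB : ∀ j : Fin n, DependsOn' (B j) ((j : ℕ) + 1)) (k : Fin n) :
    distPMeas B δ ((k : ℕ) + 1) (B k)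
      ≤ (1 / (4 * δ * (1 - δ))) * ∑ z : ∀ i, S i, (alpha (B k) k z) ^ 2 * distP B δ (k : ℕ) z := by
  classical
  have hδ' : (0:ℝ) < 1 - δ := by linarith
  have hk : 0 < Fintype.card (S k) := by linarith [hS k]
  have hN : (0:ℝ) < Fintype.card (S k) := by exact_mod_cast hk
  have hfib := sum_fiber k (fun z => if z ∈ B k then distP B δ ((k:ℕ)+1) z else 0)
  have inner : ∀ z : ∀ i, S i,
      ∑ y : S k, (if Function.update z k y ∈ B k then distP B δ ((k:ℕ)+1) (Function.update z k y) else 0)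
      ≤ (Fintype.card (S k) : ℝ) * ((alpha (B k) k z)^2 / (4 * δ * (1 - δ)) * distP B δ (k:ℕ) z) := by
    intro z
    set α := alpha (B k) k z with hα
    have hα0 : 0 ≤ α := alpha_nonneg _ _ _
    have hα1 : α ≤ 1 := alpha_le_one _ _ _
    have hP0 : 0 ≤ distP B δ (k:ℕ) z := distP_nonneg hδ1 _ _
    have step : ∀ y : S k,
        (if Function.update z k y ∈ B k then distP B δ ((k:ℕ)+1) (Function.update z k y) else 0)
        = (if Function.update z k y ∈ B k then max 0 ((α - δ) / (α * (1 - δ))) else 0)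
            * distP B δ (k:ℕ) z := by
      intro y
      by_cases hy : Function.update z k y ∈ B k
      · rw [if_pos hy, if_pos hy, distP_succ_lt k.isLt,
          distP_update hB k (k:ℕ) (le_refl _) z y]
        simp only [Fin.eta]
        congr 1
        rw [wt, if_pos hy, alpha_update]
      · rw [if_neg hy, if_neg hy, zero_mul]
    rw [Finset.sum_congr rfl fun y _ => step y, ← Finset.sum_mul, Finset.sum_ite,
      Finset.sum_const_zero, add_zero, Finset.sum_const, nsmul_eq_mul,
      card_filter_eq _ _ _ hN.ne']
    rw [← hα]
    have goal2 : α * (Fintype.card (S k) : ℝ) * max 0 ((α - δ) / (α * (1 - δ)))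
        ≤ (Fintype.card (S k) : ℝ) * (α^2 / (4 * δ * (1 - δ))) := by
      by_cases hcase : α < δ
      · have hm : max 0 ((α - δ) / (α * (1 - δ))) = 0 := by
          rw [max_eq_left]
          exact div_nonpos_of_nonpos_of_nonneg (by linarith) (mul_nonneg hα0 (by linarith))
        rw [hm, mul_zero]
        positivity
      · push_neg at hcase
        have hαpos : 0 < α := lt_of_lt_of_le hδ0 hcase
        have hm : max 0 ((α - δ) / (α * (1 - δ))) = (α - δ) / (α * (1 - δ)) := by
          rw [max_eq_right]
          exact div_nonneg (by linarith) (mul_nonneg hα0 (by linarith))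
        rw [hm]
        have h1 : α * (Fintype.card (S k) : ℝ) * ((α - δ) / (α * (1 - δ)))
            = (Fintype.card (S k) : ℝ) * ((α - δ) / (1 - δ)) := by
          field_simp
        rw [h1]
        apply mul_le_mul_of_nonneg_left _ (le_of_lt hN)
        rw [div_le_div_iff₀ hδ' (by positivity)]
        nlinarith [sq_nonneg (α - 2*δ)]
    calc α * (Fintype.card (S k) : ℝ) * max 0 ((α - δ) / (α * (1 - δ))) * distP B δ (k:ℕ) z
        ≤ (Fintype.card (S k) : ℝ) * (α^2 / (4 * δ * (1 - δ))) * distP B δ (k:ℕ) z :=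
          mul_le_mul_of_nonneg_right goal2 hP0
      _ = (Fintype.card (S k) : ℝ) * (α^2 / (4 * δ * (1 - δ)) * distP B δ (k:ℕ) z) := by ring
  have hsum_le : ∑ z : ∀ i, S i, ∑ y : S k,
      (if Function.update z k y ∈ B k then distP B δ ((k:ℕ)+1) (Function.update z k y) else 0)
      ≤ ∑ z : ∀ i, S i, (Fintype.card (S k) : ℝ)
          * ((alpha (B k) k z)^2 / (4 * δ * (1 - δ)) * distP B δ (k:ℕ) z) :=
    Finset.sum_le_sum fun z _ => inner z
  rw [hfib, ← Finset.mul_sum] at hsum_le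
  have hstep : distPMeas B δ ((k:ℕ)+1) (B k)
      ≤ ∑ z : ∀ i, S i, (alpha (B k) k z)^2 / (4 * δ * (1 - δ)) * distP B δ (k:ℕ) z := by
    rw [distPMeas]
    exact le_of_mul_le_mul_left hsum_le hN
  calc distPMeas B δ ((k:ℕ)+1) (B k)
      ≤ ∑ z : ∀ i, S i, (alpha (B k) k z)^2 / (4 * δ * (1 - δ)) * distP B δ (k:ℕ) z := hstep
    _ = (1 / (4 * δ * (1 - δ))) * ∑ z : ∀ i, S i, (alpha (B k) k z) ^ 2 * distP B δ (k : ℕ) z := by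
        rw [Finset.mul_sum]
        exact Finset.sum_congr rfl fun z _ => by ring

end Aux2

section Main

open Finset Function

variable {n : ℕ} {S : Fin n → Type*} [∀ i, Fintype (S i)]
variable {B : Fin n → Set (∀ i, S i)} {δ : ℝ}

lemma coverSet_depends (𝒜 : Finset (Hyperplane S)) (k : Fin n) :
    DependsOn' (coverSet 𝒜 k) ((k : ℕ) + 1) := by
  rintro x y hagree ⟨A, hA, hmax, hx⟩
  refine ⟨A, hA, hmax, fun i => ?_⟩
  by_cases hfull : A.Y i = Set.univ
  · rw [hfull]; trivial
  · have hi : i ∈ A.fixedFinset := Finset.mem_filter.mpr ⟨Finset.mem_univ _, hfull⟩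
    have hle : (i : WithBot (Fin n)) ≤ A.fixedFinset.max := Finset.le_max hi
    rw [hmax] at hle
    have hik : i ≤ k := WithBot.coe_le_coe.mp hle
    have hik' : (i : ℕ) ≤ (k : ℕ) := hik
    have hxy := hagree i (by omega)
    rw [← hxy]; exact hx i

lemma distPMeas_stable (hδ0 : 0 < δ) (hδ1 : δ ≤ 1/2) (hS : ∀ i, 2 ≤ Fintype.card (S i))
    (hB : ∀ j : Fin n, DependsOn' (B j) ((j : ℕ) + 1)) (k : Fin n) :
    ∀ m, (k : ℕ) + 1 ≤ m → distPMeas B δ m (B k) = distPMeas B δ ((k : ℕ) + 1) (B k) := by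
  intro m
  induction m with
  | zero => omega
  | succ m ih =>
    intro hm
    by_cases h : (k : ℕ) + 1 = m + 1
    · rw [← h]
    · have hm' : (k : ℕ) + 1 ≤ m := by omega
      rw [distPMeas_succ hδ0 hδ1 hS hB (hB k) hm']
      exact ih hm'

end Main

/-- The covering lemma of the distortion method: if
`(1/(4δ(1-δ))) ∑_{k=1}^n E_{k-1}[α_k(x)²] < 1`, then the hyperplanes do not cover. -/
theorem not_cover_of_moment_sum_lt {n : ℕ} {S : Fin n → Type*} [∀ i, Fintype (S i)]
    (hS : ∀ i, 2 ≤ Fintype.card (S i)) (δ : ℝ) (hδ0 : 0 < δ) (hδ1 : δ ≤ 1 / 2)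
    (𝒜 : Finset (Hyperplane S)) (hF : ∀ A ∈ 𝒜, A.fixedFinset.Nonempty)
    (hsum : (1 / (4 * δ * (1 - δ))) *
        ∑ k : Fin n, ∑ z : ∀ i, S i,
          (alpha (coverSet 𝒜 k) k z) ^ 2 * distP (coverSet 𝒜) δ (k : ℕ) z < 1) :
    (⋃ A ∈ 𝒜, A.toSet) ≠ Set.univ := by
  intro hcover
  set B : Fin n → Set (∀ i, S i) := coverSet 𝒜 with hBdef
  have hB : ∀ j : Fin n, DependsOn' (B j) ((j : ℕ) + 1) := coverSet_depends 𝒜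
  have htot := distP_total hδ0 hδ1 hS hB n
  have hcov : ∀ z : ∀ i, S i, ∃ k : Fin n, z ∈ B k := by
    intro z
    have hz : z ∈ ⋃ A ∈ 𝒜, Hyperplane.toSet A := by rw [hcover]; trivial
    rw [Set.mem_iUnion₂] at hz
    obtain ⟨A, hA, hzA⟩ := hz
    obtain ⟨k, hk⟩ := Finset.max_of_nonempty (hF A hA)
    exact ⟨k, A, hA, hk, hzA⟩
  have h2 : ∑ z : ∀ i, S i, distP B δ n z
      ≤ ∑ z : ∀ i, S i, ∑ k : Fin n, (if z ∈ B k then distP B δ n z else 0) := by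
    apply Finset.sum_le_sum
    intro z _
    obtain ⟨k, hk⟩ := hcov z
    have hle := Finset.single_le_sum
      (f := fun k : Fin n => if z ∈ B k then distP B δ n z else 0)
      (fun j _ => by
        split
        · exact distP_nonneg hδ1 _ _
        · exact le_rfl) (Finset.mem_univ k)
    simpa only [if_pos hk] using hle
  rw [Finset.sum_comm] at h2
  have h3 : ∑ k : Fin n, ∑ z : ∀ i, S i, (if z ∈ B k then distP B δ n z else 0)
      = ∑ k : Fin n, distPMeas B δ n (B k) := rfl
  rw [h3, htot] at h2
  have h4 : ∑ k : Fin n, distPMeas B δ n (B k)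
      ≤ ∑ k : Fin n, (1 / (4 * δ * (1 - δ)))
          * ∑ z : ∀ i, S i, (alpha (B k) k z) ^ 2 * distP B δ (k : ℕ) z := by
    apply Finset.sum_le_sum
    intro k _
    rw [distPMeas_stable hδ0 hδ1 hS hB k n k.isLt]
    exact distPMeas_key hδ0 hδ1 hS hB k
  rw [← Finset.mul_sum] at h4
  have : (1:ℝ) < 1 := lt_of_le_of_lt (le_trans h2 h4) hsum
  exact lt_irrefl _ this
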